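/- arXiv:1102.2541 — 2 statements merged into one kernel-verified Lean document; each statement's English description precedes it below -/
import Mathlib

section
/- Let X be a random variable with E[X] = 0, E[X²] < ∞, satisfying the distributional fixed point equation X =_d Σ_{k=1}^b V_k X^{(k)} + C(𝓥), where X^{(1)},…,X^{(b)} are i.i.d. copies of X independent of 𝓥 = (V₁,…,V_b), and C(𝓥) = 1 + μ^{-1}Σ_{i=1}^b V_i ln V_i. Then Var(X) = (μ^{-2}·E[(Σ_{i=1}^b V_i ln V_i)²] − 1) / (1 − Σ_{i=1}^b E[V_i²]), provided Σ_{i=1}^b E[V_i²] < 1. -/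
open MeasureTheory ProbabilityTheory
open scoped ENNReal

/-- Codomain family for the joint family `(𝓥, X⁽¹⁾, …, X⁽ᵇ⁾)`. -/
def obeta (b : ℕ) : Option (Fin b) → Type
  | none => Fin b → ℝ
  | some _ => ℝ

noncomputable instance (b : ℕ) (o : Option (Fin b)) : MeasurableSpace (obeta b o) := by
  cases o <;> unfold obeta <;> infer_instance

/-- The joint family: `none ↦ 𝓥` and `some k ↦ X⁽ᵏ⁾`. -/
def ofam {Ω : Type*} {b : ℕ} (Vv : Fin b → Ω → ℝ) (Xs : Fin b → Ω → ℝ) :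
    (o : Option (Fin b)) → Ω → obeta b o
  | none => fun ω i => Vv i ω
  | some k => fun ω => Xs k ω

/-!
Square both sides of the fixed point equation and take expectations. Since `𝓥` is independent of
the copies, the copies are pairwise independent and `E[X] = 0`, every cross term vanishes:
`E[(∑ₖ Vₖ X⁽ᵏ⁾)²] = ∑ₖ E[Vₖ²] E[X²]` and `E[(∑ₖ Vₖ X⁽ᵏ⁾) C(𝓥)] = 0`. As `E[∑ᵢ Vᵢ ln Vᵢ] = -μ`,
`E[C(𝓥)²] = μ⁻² E[(∑ᵢ Vᵢ ln Vᵢ)²] - 1`, and `E[X²]` solves a linear equation.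
-/

namespace ProbabilityTheory

variable {Ω ι : Type*} [MeasurableSpace Ω] {P : Measure Ω}

lemma IndepFun.memLp_two_mul {f g : Ω → ℝ} (hfg : IndepFun f g P) (hf : MemLp f 2 P)
    (hg : MemLp g 2 P) : MemLp (f * g) 2 P := by
  have hsq : IndepFun (fun ω => f ω ^ 2) (fun ω => g ω ^ 2) P :=
    hfg.comp (measurable_id.pow_const 2) (measurable_id.pow_const 2)
  refine (memLp_two_iff_integrable_sq (hf.1.mul hg.1)).2 ?_
  exact (hsq.integrable_mul hf.integrable_sq hg.integrable_sq).congr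
    (.of_forall fun ω => (mul_pow (f ω) (g ω) 2).symm)

lemma iIndepFun.indepFun_none_some [Fintype ι] {β : Option ι → Type*} [∀ o, MeasurableSpace (β o)]
    {f : ∀ o, Ω → β o} (hf : iIndepFun f P) (hmeas : ∀ o, Measurable (f o)) :
    IndepFun (f none) (fun ω k => f (some k) ω) P := by
  classical
  have hdisj : Disjoint {none} (Finset.univ.image (some : ι → Option ι)) := by simp
  have hsome : ∀ k, some k ∈ Finset.univ.image (some : ι → Option ι) := by simp
  exact (hf.indepFun_finset _ _ hdisj hmeas).comp
    (measurable_pi_apply (⟨none, Finset.mem_singleton_self _⟩ : ({none} : Finset (Option ι))))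
    (measurable_pi_lambda _ fun k =>
      measurable_pi_apply (⟨some k, hsome k⟩ : Finset.univ.image (some : ι → Option ι)))

lemma memLp_of_nonneg_of_sum_eq_one [IsFiniteMeasure P] [Fintype ι] {V : ι → Ω → ℝ}
    (hV : ∀ i, AEStronglyMeasurable (V i) P) (h0 : ∀ᵐ ω ∂P, ∀ i, 0 ≤ V i ω)
    (h1 : ∀ᵐ ω ∂P, ∑ i, V i ω = 1) (p : ℝ≥0∞) (i : ι) : MemLp (V i) p P :=
  MemLp.of_bound (hV i) 1 <| by
    filter_upwards [h0, h1] with ω h0 h1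
    rw [Real.norm_eq_abs, abs_of_nonneg (h0 i), ← h1]
    exact Finset.single_le_sum (fun j _ => h0 j) (Finset.mem_univ i)

section WeightedSum

variable [Fintype ι] {V Y : ι → Ω → ℝ}

lemma integral_sq_sum_mul_eq (hVY : IndepFun (fun ω i => V i ω) (fun ω k => Y k ω) P)
    (hYY : Pairwise fun k l => IndepFun (Y k) (Y l) P) (hV : ∀ i, MemLp (V i) 2 P)
    (hY : ∀ k, MemLp (Y k) 2 P) (hY0 : ∀ k, ∫ ω, Y k ω ∂P = 0) :
    ∫ ω, (∑ k, V k ω * Y k ω) ^ 2 ∂P = ∑ k, (∫ ω, V k ω ^ 2 ∂P) * ∫ ω, Y k ω ^ 2 ∂P := by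
  have hterm : ∀ k l, IndepFun (V k * V l) (Y k * Y l) P := fun k l =>
    hVY.comp ((measurable_pi_apply k).mul (measurable_pi_apply l))
      ((measurable_pi_apply k).mul (measurable_pi_apply l))
  have hint : ∀ k l, Integrable (fun ω => V k ω * V l ω * (Y k ω * Y l ω)) P := fun k l =>
    (hterm k l).integrable_mul ((hV k).integrable_mul (hV l)) ((hY k).integrable_mul (hY l))
  have hoff : ∀ k l, k ≠ l → ∫ ω, Y k ω * Y l ω ∂P = 0 := fun k l hkl => by
    rw [(hYY hkl).integral_fun_mul_eq_mul_integral (hY k).1 (hY l).1, hY0, zero_mul]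
  calc ∫ ω, (∑ k, V k ω * Y k ω) ^ 2 ∂P
      = ∫ ω, ∑ k, ∑ l, V k ω * V l ω * (Y k ω * Y l ω) ∂P := by
        congr 1 with ω
        simp only [sq, Finset.sum_mul_sum]
        exact Finset.sum_congr rfl fun k _ => Finset.sum_congr rfl fun l _ => by ring
    _ = ∑ k, ∑ l, (∫ ω, V k ω * V l ω ∂P) * ∫ ω, Y k ω * Y l ω ∂P := by
        rw [integral_finsetSum _ fun k _ => integrable_finsetSum _ fun l _ => hint k l]
        refine Finset.sum_congr rfl fun k _ => ?_
        rw [integral_finsetSum _ fun l _ => hint k l]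
        exact Finset.sum_congr rfl fun l _ => (hterm k l).integral_fun_mul_eq_mul_integral
          ((hV k).1.mul (hV l).1) ((hY k).1.mul (hY l).1)
    _ = ∑ k, (∫ ω, V k ω ^ 2 ∂P) * ∫ ω, Y k ω ^ 2 ∂P := by
        refine Finset.sum_congr rfl fun k _ => ?_
        rw [Finset.sum_eq_single k (fun l _ hlk => by rw [hoff k l hlk.symm, mul_zero])
          (by simp)]
        simp only [sq]

variable [IsFiniteMeasure P]

lemma integral_sum_mul_mul_comp_eq_zero
    (hVY : IndepFun (fun ω i => V i ω) (fun ω k => Y k ω) P) (hV : ∀ i, MemLp (V i) 2 P)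
    (hY : ∀ k, MemLp (Y k) 2 P) (hY0 : ∀ k, ∫ ω, Y k ω ∂P = 0) {c : (ι → ℝ) → ℝ}
    (hc : Measurable c) (hcV : MemLp (fun ω => c fun i => V i ω) 2 P) :
    ∫ ω, (∑ k, V k ω * Y k ω) * c (fun i => V i ω) ∂P = 0 := by
  have hterm : ∀ k, IndepFun (fun ω => V k ω * c fun i => V i ω) (Y k) P := fun k =>
    hVY.comp ((measurable_pi_apply k).mul hc) (measurable_pi_apply k)
  have hint : ∀ k, Integrable (fun ω => V k ω * c (fun i => V i ω) * Y k ω) P := fun k =>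
    (hterm k).integrable_mul ((hV k).integrable_mul hcV) ((hY k).integrable one_le_two)
  calc ∫ ω, (∑ k, V k ω * Y k ω) * c (fun i => V i ω) ∂P
      = ∑ k, ∫ ω, V k ω * c (fun i => V i ω) * Y k ω ∂P := by
        rw [← integral_finsetSum _ fun k _ => hint k]
        congr 1 with ω
        rw [Finset.sum_mul]
        exact Finset.sum_congr rfl fun k _ => by ring
    _ = 0 := Finset.sum_eq_zero fun k _ => by
        rw [(hterm k).integral_fun_mul_eq_mul_integral ((hV k).1.mul hcV.1) (hY k).1, hY0,
          mul_zero]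

lemma integral_sq_sum_mul_add_comp_eq
    (hVY : IndepFun (fun ω i => V i ω) (fun ω k => Y k ω) P)
    (hYY : Pairwise fun k l => IndepFun (Y k) (Y l) P) (hV : ∀ i, MemLp (V i) 2 P)
    (hY : ∀ k, MemLp (Y k) 2 P) (hY0 : ∀ k, ∫ ω, Y k ω ∂P = 0) {c : (ι → ℝ) → ℝ}
    (hc : Measurable c) (hcV : MemLp (fun ω => c fun i => V i ω) 2 P) :
    ∫ ω, (∑ k, V k ω * Y k ω + c fun i => V i ω) ^ 2 ∂P =
      ∑ k, (∫ ω, V k ω ^ 2 ∂P) * (∫ ω, Y k ω ^ 2 ∂P) + ∫ ω, (c fun i => V i ω) ^ 2 ∂P := by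
  have hS : MemLp (fun ω => ∑ k, V k ω * Y k ω) 2 P :=
    memLp_finsetSum _ fun k _ =>
      (hVY.comp (measurable_pi_apply k) (measurable_pi_apply k)).memLp_two_mul (hV k) (hY k)
  have hSc : Integrable (fun ω => 2 * ((∑ k, V k ω * Y k ω) * c fun i => V i ω)) P :=
    (hS.integrable_mul hcV).const_mul 2
  calc ∫ ω, (∑ k, V k ω * Y k ω + c fun i => V i ω) ^ 2 ∂P
      = ∫ ω, (∑ k, V k ω * Y k ω) ^ 2 ∂P
          + 2 * ∫ ω, (∑ k, V k ω * Y k ω) * c (fun i => V i ω) ∂P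
          + ∫ ω, (c fun i => V i ω) ^ 2 ∂P := by
        rw [← integral_const_mul, ← integral_add hS.integrable_sq hSc,
          ← integral_add (by exact hS.integrable_sq.add hSc) hcV.integrable_sq]
        congr 1 with ω
        ring
    _ = _ := by
        rw [integral_sq_sum_mul_eq hVY hYY hV hY hY0,
          integral_sum_mul_mul_comp_eq_zero hVY hV hY hY0 hc hcV, mul_zero, add_zero]

end WeightedSum

lemma integral_one_add_mul_sq [IsProbabilityMeasure P] {f : Ω → ℝ} (hf : MemLp f 2 P) (a : ℝ) :
    ∫ ω, (1 + a * f ω) ^ 2 ∂P = 1 + 2 * a * ∫ ω, f ω ∂P + a ^ 2 * ∫ ω, f ω ^ 2 ∂P := by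
  have hlin : Integrable (fun ω => 2 * a * f ω) P := (hf.integrable one_le_two).const_mul _
  have hquad : Integrable (fun ω => a ^ 2 * f ω ^ 2) P := hf.integrable_sq.const_mul _
  calc ∫ ω, (1 + a * f ω) ^ 2 ∂P = ∫ ω, 1 + (2 * a * f ω + a ^ 2 * f ω ^ 2) ∂P := by
        congr 1 with ω
        ring
    _ = _ := by
        rw [integral_add (integrable_const 1) (by exact hlin.add hquad), integral_add hlin hquad,
          integral_const_mul, integral_const_mul, integral_const, probReal_univ, one_smul,
          add_assoc]

end ProbabilityTheory

lemma indepFun_ofam {Ω : Type*} [MeasurableSpace Ω] {P : Measure Ω} {b : ℕ}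
    {Vv Xs : Fin b → Ω → ℝ} (hindep : iIndepFun (ofam Vv Xs) P) (hVmeas : ∀ i, Measurable (Vv i))
    (hXsmeas : ∀ k, Measurable (Xs k)) :
    IndepFun (fun ω i => Vv i ω) (fun ω k => Xs k ω) P := by
  refine hindep.indepFun_none_some ?_
  rintro (_ | k)
  exacts [measurable_pi_lambda _ hVmeas, hXsmeas k]

theorem stmt5_general
    {Ω : Type*} [MeasurableSpace Ω] (P : Measure Ω) [IsProbabilityMeasure P]
    (b : ℕ)
    (X : Ω → ℝ) (Xs : Fin b → Ω → ℝ) (Vv : Fin b → Ω → ℝ)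
    (hXmeas : Measurable X) (hXsmeas : ∀ k, Measurable (Xs k))
    (hVmeas : ∀ i, Measurable (Vv i))
    (hnonneg : ∀ᵐ ω ∂P, ∀ i, 0 ≤ Vv i ω) (hsum : ∀ᵐ ω ∂P, ∑ i, Vv i ω = 1)
    -- the copies `X⁽ᵏ⁾` and the split vector `𝓥` are (jointly) independent
    (hindep : iIndepFun (ofam Vv Xs) P)
    (hcopies : ∀ k, IdentDistrib (Xs k) X P P)
    (μ : ℝ) (hμ : μ = ∫ ω, -(∑ i, Vv i ω * Real.log (Vv i ω)) ∂P) (hμpos : 0 < μ)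
    (hmean : ∫ ω, X ω ∂P = 0)
    (hX2 : Integrable (fun ω => (X ω) ^ 2) P)
    (hE2 : Integrable (fun ω => (∑ i, Vv i ω * Real.log (Vv i ω)) ^ 2) P)
    (hV2 : ∑ i, ∫ ω, (Vv i ω) ^ 2 ∂P < 1)
    -- the distributional fixed point equation
    (hfix : P.map X = P.map (fun ω =>
      (∑ k, Vv k ω * Xs k ω) + (1 + μ⁻¹ * ∑ i, Vv i ω * Real.log (Vv i ω)))) :
    ∫ ω, (X ω) ^ 2 ∂P =
      (μ⁻¹ ^ 2 * ∫ ω, (∑ i, Vv i ω * Real.log (Vv i ω)) ^ 2 ∂P - 1) /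
        (1 - ∑ i, ∫ ω, (Vv i ω) ^ 2 ∂P) := by
  have hV := memLp_of_nonneg_of_sum_eq_one (fun i => (hVmeas i).aestronglyMeasurable)
    hnonneg hsum 2
  have hY : ∀ k, MemLp (Xs k) 2 P := fun k =>
    (hcopies k).memLp_iff.2 ((memLp_two_iff_integrable_sq hXmeas.aestronglyMeasurable).2 hX2)
  have hY0 : ∀ k, ∫ ω, Xs k ω ∂P = 0 := fun k => (hcopies k).integral_eq.trans hmean
  have hYsq : ∀ k, ∫ ω, Xs k ω ^ 2 ∂P = ∫ ω, X ω ^ 2 ∂P := fun k =>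
    ((hcopies k).comp (measurable_id.pow_const 2)).integral_eq
  have hYY : Pairwise fun k l => IndepFun (Xs k) (Xs l) P := fun k l hkl =>
    hindep.indepFun (Option.some_injective _ |>.ne hkl)
  have hL : MemLp (fun ω => ∑ i, Vv i ω * Real.log (Vv i ω)) 2 P :=
    (memLp_two_iff_integrable_sq (by fun_prop)).2 hE2
  have hC : MemLp (fun ω => 1 + μ⁻¹ * ∑ i, Vv i ω * Real.log (Vv i ω)) 2 P :=
    (memLp_const (1 : ℝ)).add (hL.const_mul μ⁻¹)
  have hLmean : ∫ ω, ∑ i, Vv i ω * Real.log (Vv i ω) ∂P = -μ := by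
    rw [hμ, integral_neg, neg_neg]
  have hsecond := integral_sq_sum_mul_add_comp_eq (indepFun_ofam hindep hVmeas hXsmeas) hYY hV
    hY hY0 (c := fun v => 1 + μ⁻¹ * ∑ i, v i * Real.log (v i)) (by fun_prop) hC
  have hmoment : ∫ ω, X ω ^ 2 ∂P = ∫ ω, ((∑ k, Vv k ω * Xs k ω)
      + (1 + μ⁻¹ * ∑ i, Vv i ω * Real.log (Vv i ω))) ^ 2 ∂P :=
    (IdentDistrib.comp ⟨hXmeas.aemeasurable, by fun_prop, hfix⟩
      (measurable_id.pow_const 2)).integral_eq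
  rw [hsecond, integral_one_add_mul_sq hL, hLmean] at hmoment
  simp only [hYsq, ← Finset.sum_mul] at hmoment
  rw [eq_div_iff (by linarith)]
  linear_combination hmoment - 2 * inv_mul_cancel₀ hμpos.ne'

/-- Variance of the solution of the path-length fixed point equation:
if `X =_d ∑ₖ Vₖ X⁽ᵏ⁾ + C(𝓥)` with `X⁽ᵏ⁾` i.i.d. copies of `X` independent of
`𝓥 = (V₁,…,V_b)`, `E[X] = 0`, `E[X²] < ∞`, then
`Var(X) = (μ⁻²·E[(∑ᵢ Vᵢ ln Vᵢ)²] − 1)/(1 − ∑ᵢ E[Vᵢ²])`. -/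
theorem stmt5
    {Ω : Type*} [MeasurableSpace Ω] (P : Measure Ω) [IsProbabilityMeasure P]
    (b : ℕ) (hb : 2 ≤ b)
    (X : Ω → ℝ) (Xs : Fin b → Ω → ℝ) (Vv : Fin b → Ω → ℝ)
    (hXmeas : Measurable X) (hXsmeas : ∀ k, Measurable (Xs k))
    (hVmeas : ∀ i, Measurable (Vv i))
    (hnonneg : ∀ᵐ ω ∂P, ∀ i, 0 ≤ Vv i ω) (hsum : ∀ᵐ ω ∂P, ∑ i, Vv i ω = 1)
    -- the copies `X⁽ᵏ⁾` and the split vector `𝓥` are (jointly) independent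
    (hindep : iIndepFun (ofam Vv Xs) P)
    (hcopies : ∀ k, IdentDistrib (Xs k) X P P)
    (μ : ℝ) (hμ : μ = ∫ ω, -(∑ i, Vv i ω * Real.log (Vv i ω)) ∂P) (hμpos : 0 < μ)
    (hmean : ∫ ω, X ω ∂P = 0)
    (hX2 : Integrable (fun ω => (X ω) ^ 2) P)
    (hE2 : Integrable (fun ω => (∑ i, Vv i ω * Real.log (Vv i ω)) ^ 2) P)
    (hV2 : ∑ i, ∫ ω, (Vv i ω) ^ 2 ∂P < 1)
    -- the distributional fixed point equation
    (hfix : P.map X = P.map (fun ω =>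
      (∑ k, Vv k ω * Xs k ω) + (1 + μ⁻¹ * ∑ i, Vv i ω * Real.log (Vv i ω)))) :
    ∫ ω, (X ω) ^ 2 ∂P =
      (μ⁻¹ ^ 2 * ∫ ω, (∑ i, Vv i ω * Real.log (Vv i ω)) ^ 2 ∂P - 1) /
        (1 - ∑ i, ∫ ω, (Vv i ω) ^ 2 ∂P) :=
  stmt5_general P b X Xs Vv hXmeas hXsmeas hVmeas hnonneg hsum hindep hcopies μ hμ hμpos hmean hX2
    hE2 hV2 hfix
end

section
/- There exists b and a random vector 𝓥 = (V₁,…,V_b) with nonnegative components summing to 1 such that ln V is lattice, namely all possible values of the components lie in {2^{-k} : k ∈ ℕ} ∪ {0}, and yet C(𝓥) ≠ 0 with positive probability. Concretely, take b = 5 and let 𝓥 be a uniformly random permutation of (1/2, 1/8, 1/8, 1/8, 1/8) or of (1/2, 1/4, 1/4, 0, 0), each chosen with probability 1/2. Then the entropy −Σᵢ V_i ln V_i equals 2 ln 2 in the first case and (3/2) ln 2 in the second, hence μ = (7/4) ln 2, and C(𝓥) = 1 − (entropy)/μ takes the two values 1 − 8/7 = −1/7 and 1 − 6/7 = 1/7,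 each with probability 1/2. -/
open Real

lemma log_half : Real.log (1/2 : ℝ) = -Real.log 2 := by
  rw [one_div, Real.log_inv]

lemma log_quarter : Real.log (1/4 : ℝ) = -(2 * Real.log 2) := by
  have : (1/4 : ℝ) = (1/2)^2 := by norm_num
  rw [this, Real.log_pow, log_half]; ring

lemma log_eighth : Real.log (1/8 : ℝ) = -(3 * Real.log 2) := by
  have : (1/8 : ℝ) = (1/2)^3 := by norm_num
  rw [this, Real.log_pow, log_half]; ring

lemma log4 : Real.log (4 : ℝ) = 2 * Real.log 2 := by
  have : (4 : ℝ) = 2^2 := by norm_num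
  rw [this, Real.log_pow]; push_cast; ring

lemma log8 : Real.log (8 : ℝ) = 3 * Real.log 2 := by
  have : (8 : ℝ) = 2^3 := by norm_num
  rw [this, Real.log_pow]; push_cast; ring

/-- An explicit lattice example with a nonvanishing toll function: with `b = 5` and `𝓥`
a uniformly random permutation of `p = (1/2,1/8,1/8,1/8,1/8)` or of
`q = (1/2,1/4,1/4,0,0)` (each with probability `1/2`), every nonzero component is a
power of `1/2` (so `ln V` is lattice), the entropies are `2 ln 2` and `(3/2) ln 2`,
`μ = (7/4) ln 2`, and the toll `C(𝓥) = 1 − entropy/μ` takes the values `−1/7` and `1/7`,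
each with probability `1/2`. -/
theorem stmt19 :
    ∃ p q : Fin 5 → ℝ,
      p = ![1/2, 1/8, 1/8, 1/8, 1/8] ∧ q = ![1/2, 1/4, 1/4, 0, 0] ∧
      (∀ i, 0 ≤ p i) ∧ (∀ i, 0 ≤ q i) ∧
      (∑ i, p i = 1) ∧ (∑ i, q i = 1) ∧
      -- all nonzero component values lie in `{2^{-k}}`, i.e. `ln V ∈ (ln 2)·ℤ`
      (∀ i, p i = 0 ∨ ∃ k : ℤ, Real.log (p i) = Real.log 2 * k) ∧
      (∀ i, q i = 0 ∨ ∃ k : ℤ, Real.log (q i) = Real.log 2 * k) ∧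
      -(∑ i, p i * Real.log (p i)) = 2 * Real.log 2 ∧
      -(∑ i, q i * Real.log (q i)) = (3/2) * Real.log 2 ∧
      (1/2) * (-(∑ i, p i * Real.log (p i))) + (1/2) * (-(∑ i, q i * Real.log (q i)))
        = (7/4) * Real.log 2 ∧
      1 - (2 * Real.log 2) / ((7/4) * Real.log 2) = -(1/7) ∧
      1 - ((3/2) * Real.log 2) / ((7/4) * Real.log 2) = 1/7 := by
  have hlog2 : Real.log 2 ≠ 0 := by
    have := Real.log_pos (by norm_num : (1:ℝ) < 2); linarith
  refine ⟨![1/2, 1/8, 1/8, 1/8, 1/8], ![1/2, 1/4, 1/4, 0, 0], rfl, rfl, ?_, ?_, ?_, ?_, ?_, ?_, ?_, ?_, ?_, ?_, ?_⟩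
  · intro i; fin_cases i <;> norm_num
  · intro i; fin_cases i <;> norm_num
  · simp [Fin.sum_univ_five]; norm_num
  · simp [Fin.sum_univ_five]; norm_num
  · intro i; right; fin_cases i
    · exact ⟨-1, by simp⟩
    all_goals exact ⟨-3, by simp [log8]; push_cast; ring⟩
  · intro i; fin_cases i
    · exact Or.inr ⟨-1, by simp⟩
    · exact Or.inr ⟨-2, by simp [log4]; push_cast; ring⟩
    · exact Or.inr ⟨-2, by simp [log4]; push_cast; ring⟩
    · exact Or.inl (by simp)
    · exact Or.inl (by simp)
  · simp [Fin.sum_univ_five, log8]; ring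
  · simp [Fin.sum_univ_five, log4]; ring
  · simp [Fin.sum_univ_five, log4, log8]; ring
  · field_simp; ring
  · field_simp; ring
end
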